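/- For integers K, L, t with 1 ≤ L, 0 ≤ t, t + L ≤ K, the ratio of the number of (λ,π,s)-transmissions to the subpacketization equals (K−t)/(L+t); that is, [C(K,L)·C(K−L,t)·L] / [C(K,t)·C(K−t−1,L−1)·(L+t)] = (K−t)/(L+t). -/

import Mathlib

lemma key (K L t : ℕ) (hL : 1 ≤ L) (hK : t + L ≤ K) :
    K.choose L * (K - L).choose t * L = K.choose t * (K - t - 1).choose (L - 1) * (K - t) := by
  have h1 : K.choose (L + t) * (L + t).choose L = K.choose L * (K - L).choose t := by
    have := Nat.choose_mul (n := K) (k := L + t) (s := L) (by omega)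
    simpa [Nat.add_sub_cancel_left] using this
  have h2 : K.choose (L + t) * (L + t).choose t = K.choose t * (K - t).choose L := by
    have := Nat.choose_mul (n := K) (k := L + t) (s := t) (by omega)
    have e : L + t - t = L := by omega
    simpa [e] using this
  have hsymm : (L + t).choose L = (L + t).choose t := Nat.choose_symm_add
  have h3 : K.choose L * (K - L).choose t = K.choose t * (K - t).choose L := by
    rw [← h1, ← h2, hsymm]
  have h4 : (K - t) * (K - t - 1).choose (L - 1) = (K - t).choose L * L := by
    have := Nat.add_one_mul_choose_eq (K - t - 1) (L - 1)
    have e1 : K - t - 1 + 1 = K - t := by omega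
    have e2 : L - 1 + 1 = L := by omega
    rw [e1, e2] at this
    exact this
  calc K.choose L * (K - L).choose t * L = K.choose t * ((K - t).choose L * L) := by
        rw [h3, Nat.mul_assoc]
    _ = K.choose t * (K - t - 1).choose (L - 1) * (K - t) := by rw [← h4]; ring

/-- The ratio of the number of (λ,π,s)-transmissions to the subpacketization
equals `(K−t)/(L+t)`. -/
theorem stmt_1 (K L t : ℕ) (hL : 1 ≤ L) (hK : t + L ≤ K) :
    ((K.choose L * (K - L).choose t * L : ℚ)) /
      ((K.choose t * (K - t - 1).choose (L - 1) * (L + t) : ℚ))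
      = ((K : ℚ) - t) / ((L : ℚ) + t) := by
  have hKt : (K : ℚ) - t = ((K - t : ℕ) : ℚ) := by
    have : t ≤ K := by omega
    push_cast [this]; ring
  have hc1 : (0 : ℚ) < K.choose t := by
    exact_mod_cast Nat.choose_pos (by omega : t ≤ K)
  have hc2 : (0 : ℚ) < (K - t - 1).choose (L - 1) := by
    exact_mod_cast Nat.choose_pos (by omega : L - 1 ≤ K - t - 1)
  have hLt : (0 : ℚ) < (L : ℚ) + t := by positivity
  rw [hKt]
  rw [div_eq_div_iff (by positivity) (by positivity)]
  have hq := congrArg (Nat.cast : ℕ → ℚ) (key K L t hL hK)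
  push_cast at hq
  linear_combination ((L : ℚ) + t) * hq
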